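/- There is a directed tile set of exactly 4 tile types, using only 2 colors, implementing the half-adder (each tile with west input glue A ∈ {0,1}, south input glue B ∈ {0,1}, north output glue A XOR B, east output glue A AND B, and color A XOR B), such that for all w, h ≥ 1 there is an L-shaped seed (with all south seed glues 0 and all west seed glues 1) for which the resulting directed RTAS uniquely self-assembles the w×h binary counter pattern, namely the 2-colored rectangular pattern P : [w]×[h] → {0,1} with P(x,y) equal to the x-th least-significant binary digit of (y+1) mod 2^w. -/

import Mathlib

/-!  Rectilinear tile assembly systems (RTAS), following the paper's definitions.
A tile type is a tuple of four glues (north, west, south, east) and a colour;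
glues and colours are natural numbers.  An assembly is a partial function from
`ℤ²` to tile types (modelled with `Option`). -/

structure Tile where
  north : ℕ
  west : ℕ
  south : ℕ
  east : ℕ
  color : ℕ
deriving DecidableEq, Repr

/-- An assembly: a partial function from positions to tile types. -/
abbrev Assembly := ℤ × ℤ → Option Tile

/-- A tile set is directed if no two distinct tile types have both equal west
glues and equal south glues. -/
def DirectedTS (T : Finset Tile) : Prop :=
  ∀ t₁ ∈ T, ∀ t₂ ∈ T, t₁.west = t₂.west → t₁.south = t₂.south → t₁ = t₂

/-- `t` may attach to `α` at `(x, y)`: the position is untiled, the positions to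
the west and to the south are tiled, and the west/south glues of `t` match the
east glue of the western neighbour and the north glue of the southern one. -/
def CanAttach (T : Finset Tile) (α : Assembly) (t : Tile) (x y : ℤ) : Prop :=
  t ∈ T ∧ α (x, y) = none ∧
    (∃ tw, α (x - 1, y) = some tw ∧ t.west = tw.east) ∧
    (∃ ts, α (x, y - 1) = some ts ∧ t.south = ts.north)

/-- The assembly obtained from `α` by placing `t` at `(x, y)`. -/
def Attach (α : Assembly) (t : Tile) (x y : ℤ) : Assembly :=
  fun p => if p = (x, y) then some t else α p

/-- One attachment step `α →₁ β`. -/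
def Step (T : Finset Tile) (α β : Assembly) : Prop :=
  ∃ t x y, CanAttach T α t x y ∧ β = Attach α t x y

/-- A rectilinear tile assembly system: a finite tile set together with an
L-shaped seed of width `w` and height `h`, whose tiles do not belong to the
tile set. -/
structure RTAS where
  T : Finset Tile
  w : ℕ
  h : ℕ
  seed : Assembly
  seed_dom : ∀ p : ℤ × ℤ, (seed p).isSome ↔
      (p = (-1, -1) ∨ (0 ≤ p.1 ∧ p.1 < (w : ℤ) ∧ p.2 = -1) ∨
        (p.1 = -1 ∧ 0 ≤ p.2 ∧ p.2 < (h : ℤ)))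
  seed_disjoint : ∀ p t, seed p = some t → t ∉ T

/-- The set of producible assemblies: the least set containing the seed and
closed under single attachments. -/
inductive Producible (S : RTAS) : Assembly → Prop
  | seed : Producible S S.seed
  | step {α β : Assembly} : Producible S α → Step S.T α β → Producible S β

/-- A terminal assembly: producible, and no tile of the tile set can attach. -/
def Terminal (S : RTAS) (γ : Assembly) : Prop :=
  Producible S γ ∧ ∀ β : Assembly, ¬ Step S.T γ β

/-- `S` uniquely self-assembles the `W × H` rectangular colour pattern `pat`:
some terminal assembly of `S` covers exactly `[W] × [H]` on `ℕ²`, and the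
colour of the tile at each of those positions is the colour prescribed by
`pat`.  (For a directed RTAS the terminal assembly is unique.) -/
def UniquelySelfAssembles (S : RTAS) (W H : ℕ) (pat : ℕ → ℕ → ℕ) : Prop :=
  ∃ γ : Assembly, Terminal S γ ∧
    (∀ x y : ℕ, (γ ((x : ℤ), (y : ℤ))).isSome ↔ (x < W ∧ y < H)) ∧
    (∀ x y : ℕ, ∀ t : Tile, γ ((x : ℤ), (y : ℤ)) = some t → t.color = pat x y)

/-- Glue encoding of a bit. -/
def boolGlue (b : Bool) : ℕ := cond b 1 0

/-- The half-adder tile with west input `A` and south input `B`: the north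
output is `A XOR B`, the east output (carry) is `A AND B`, and the colour is
`A XOR B`. -/
def halfAdderTile (A B : Bool) : Tile :=
  { north := boolGlue (xor A B), west := boolGlue A, south := boolGlue B,
    east := boolGlue (A && B), color := boolGlue (xor A B) }

/-- The four half-adder tile types. -/
def halfAdderSet : Finset Tile :=
  {halfAdderTile false false, halfAdderTile false true,
   halfAdderTile true false, halfAdderTile true true}

/-! Row `y` of the counter adds one to the number `y` spelled by its south glues: the carry
entering column `x` is `1` exactly when the lowest `x` bits of `y` are all `1`, i.e. when
`2 ^ x ∣ y + 1`, so the north glues spell `y + 1`. Any filling of the rectangle whose glues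
match locally can be grown from the L-shaped seed in row-major order, and the result is
terminal because no cell outside the rectangle has both its west and its south neighbour
tiled. -/

theorem Nat.testBit_add_one_eq_carry_xor (y x : ℕ) :
    (y + 1).testBit x = (decide (2 ^ x ∣ y + 1)).xor (y.testBit x) := by
  rw [testBit_eq_decide_div_mod_eq, testBit_eq_decide_div_mod_eq, Nat.succ_div]
  by_cases h : 2 ^ x ∣ y + 1
  · simp only [h, if_true, decide_true, Bool.true_xor]
    rw [← decide_not, decide_eq_decide]
    omega
  · simp [h]

theorem Nat.two_pow_succ_dvd_add_one_iff (y x : ℕ) :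
    2 ^ (x + 1) ∣ y + 1 ↔ 2 ^ x ∣ y + 1 ∧ y.testBit x := by
  by_cases h : 2 ^ x ∣ y + 1
  · rw [pow_succ, ← Nat.dvd_div_iff_mul_dvd h, Nat.succ_div_of_dvd h,
      testBit_eq_decide_div_mod_eq, decide_eq_true_iff]
    simp only [h, true_and]
    omega
  · exact ⟨fun h' => absurd ((pow_dvd_pow 2 x.le_succ).trans h') h, fun h' => absurd h'.1 h⟩

theorem boolGlue_testBit (n x : ℕ) : boolGlue (n.testBit x) = n / 2 ^ x % 2 := by
  rw [Nat.testBit_eq_decide_div_mod_eq]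
  rcases Nat.mod_two_eq_zero_or_one (n / 2 ^ x) with h | h <;> simp [h, boolGlue]

namespace RTAS

variable (S : RTAS)

theorem seed_eq_none {p : ℤ × ℤ} (hx : 0 ≤ p.1) (hy : 0 ≤ p.2) : S.seed p = none := by
  rw [← Option.not_isSome_iff_eq_none, S.seed_dom]
  rintro (rfl | ⟨-, -, h⟩ | ⟨h, -, -⟩) <;> simp_all

theorem isSome_seed_west {y : ℕ} (hy : y < S.h) : (S.seed (-1, y)).isSome :=
  (S.seed_dom _).2 (Or.inr (Or.inr ⟨rfl, by omega, by omega⟩))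

theorem isSome_seed_south {x : ℕ} (hx : x < S.w) : (S.seed (x, -1)).isSome :=
  (S.seed_dom _).2 (Or.inr (Or.inl ⟨by omega, by omega, rfl⟩))

structure IsCompatibleFilling (f : ℕ → ℕ → Tile) : Prop where
  mem : ∀ x y, x < S.w → y < S.h → f x y ∈ S.T
  west_seed : ∀ y t, y < S.h → S.seed (-1, y) = some t → (f 0 y).west = t.east
  west : ∀ x y, x + 1 < S.w → y < S.h → (f (x + 1) y).west = (f x y).east
  south_seed : ∀ x t, x < S.w → S.seed (x, -1) = some t → (f x 0).south = t.north
  south : ∀ x y, x < S.w → y + 1 < S.h → (f x (y + 1)).south = (f x y).north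

variable (f : ℕ → ℕ → Tile)

def fillUpTo (k : ℕ) : Assembly := fun p =>
  if 0 ≤ p.1 ∧ p.1 < S.w ∧ 0 ≤ p.2 ∧ p.1.toNat + S.w * p.2.toNat < k then
    some (f p.1.toNat p.2.toNat)
  else S.seed p

theorem fillUpTo_zero : S.fillUpTo f 0 = S.seed := by
  funext p
  simp [fillUpTo]

theorem fillUpTo_natCast {k x : ℕ} (y : ℕ) (hx : x < S.w) :
    S.fillUpTo f k (x, y) = if x + S.w * y < k then some (f x y) else none := by
  simp only [fillUpTo, Int.toNat_natCast]
  split_ifs <;> first | rfl | omega | exact S.seed_eq_none (by simp) (by simp)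

theorem fillUpTo_of_neg {k : ℕ} {p : ℤ × ℤ} (hp : p.1 < 0 ∨ p.2 < 0) :
    S.fillUpTo f k p = S.seed p :=
  if_neg (by omega)

theorem fillUpTo_succ {k : ℕ} (hw : 0 < S.w) :
    S.fillUpTo f (k + 1) =
      Attach (S.fillUpTo f k) (f (k % S.w) (k / S.w)) (k % S.w : ℕ) (k / S.w : ℕ) := by
  funext p
  obtain ⟨x, y⟩ := p
  by_cases hp : (x, y) = (((k % S.w : ℕ) : ℤ), ((k / S.w : ℕ) : ℤ))
  · rw [hp, S.fillUpTo_natCast f _ (Nat.mod_lt _ hw), if_pos (by rw [Nat.mod_add_div]; omega)]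
    simp [Attach]
  · rw [Attach, if_neg hp]
    simp only [fillUpTo]
    congr 1
    refine propext (and_congr_right fun hx => and_congr_right fun hxw => and_congr_right fun hy =>
      ⟨fun hlt => lt_of_le_of_ne (Nat.le_of_lt_succ hlt) fun hk => hp ?_, by omega⟩)
    obtain ⟨hy', hx'⟩ := (Nat.div_mod_unique hw).2 ⟨hk, by omega⟩
    rw [hx', hy', Int.toNat_of_nonneg hx, Int.toNat_of_nonneg hy]

variable {S f}

theorem IsCompatibleFilling.exists_west_neighbor (hf : S.IsCompatibleFilling f) {k x y : ℕ}
    (hx : x < S.w) (hy : y < S.h) (hk : x + S.w * y ≤ k) :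
    ∃ tw, S.fillUpTo f k ((x : ℤ) - 1, y) = some tw ∧ (f x y).west = tw.east := by
  cases x with
  | zero =>
    obtain ⟨t, ht⟩ := Option.isSome_iff_exists.mp (S.isSome_seed_west hy)
    refine ⟨t, ?_, hf.west_seed y t hy ht⟩
    rw [S.fillUpTo_of_neg f (by simp)]
    simpa using ht
  | succ x =>
    refine ⟨f x y, ?_, hf.west x y hx hy⟩
    rw [show ((x + 1 : ℕ) : ℤ) - 1 = x by push_cast; ring, S.fillUpTo_natCast f y (by omega),
      if_pos (by omega)]

theorem IsCompatibleFilling.exists_south_neighbor (hf : S.IsCompatibleFilling f) {k x y : ℕ}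
    (hx : x < S.w) (hy : y < S.h) (hk : x + S.w * y ≤ k) :
    ∃ ts, S.fillUpTo f k (x, (y : ℤ) - 1) = some ts ∧ (f x y).south = ts.north := by
  cases y with
  | zero =>
    obtain ⟨t, ht⟩ := Option.isSome_iff_exists.mp (S.isSome_seed_south hx)
    refine ⟨t, ?_, hf.south_seed x t hx ht⟩
    rw [S.fillUpTo_of_neg f (by simp)]
    simpa using ht
  | succ y =>
    refine ⟨f x y, ?_, hf.south x y hx hy⟩
    rw [mul_add_one] at hk
    rw [show ((y + 1 : ℕ) : ℤ) - 1 = y by push_cast; ring, S.fillUpTo_natCast f y hx,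
      if_pos (by omega)]

theorem IsCompatibleFilling.step_fillUpTo (hf : S.IsCompatibleFilling f) {k : ℕ}
    (hk : k < S.w * S.h) : Step S.T (S.fillUpTo f k) (S.fillUpTo f (k + 1)) := by
  have hw : 0 < S.w := Nat.pos_of_mul_pos_right (by omega : 0 < S.w * S.h)
  have hx : k % S.w < S.w := Nat.mod_lt _ hw
  have hy : k / S.w < S.h := Nat.div_lt_of_lt_mul hk
  have hxy : k % S.w + S.w * (k / S.w) = k := Nat.mod_add_div k S.w
  refine ⟨_, _, _, ⟨hf.mem _ _ hx hy, ?_, hf.exists_west_neighbor hx hy hxy.le,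
    hf.exists_south_neighbor hx hy hxy.le⟩, S.fillUpTo_succ f hw⟩
  rw [S.fillUpTo_natCast f _ hx, if_neg (by omega)]

theorem IsCompatibleFilling.producible_fillUpTo (hf : S.IsCompatibleFilling f) :
    ∀ {k : ℕ}, k ≤ S.w * S.h → Producible S (S.fillUpTo f k)
  | 0, _ => S.fillUpTo_zero f ▸ .seed
  | _ + 1, hk => .step (hf.producible_fillUpTo (by omega)) (hf.step_fillUpTo (by omega))

variable (S f)

def fill : Assembly := S.fillUpTo f (S.w * S.h)

theorem fill_natCast (x y : ℕ) :
    S.fill f (x, y) = if x < S.w ∧ y < S.h then some (f x y) else none := by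
  by_cases hx : x < S.w
  · have hrow : x + S.w * y < S.w * S.h ↔ y < S.h :=
      ⟨fun h => Nat.lt_of_mul_lt_mul_left (a := S.w) (by omega), fun h => by
        nlinarith⟩
    rw [fill, S.fillUpTo_natCast f y hx]
    simp only [hrow, hx, true_and]
  · rw [fill, fillUpTo, if_neg (by omega), if_neg (by omega),
      S.seed_eq_none (by simp) (by simp)]

theorem isSome_fill_iff (p : ℤ × ℤ) :
    (S.fill f p).isSome ↔
      (0 ≤ p.1 ∧ p.1 < S.w ∧ 0 ≤ p.2 ∧ p.2 < S.h) ∨ (S.seed p).isSome := by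
  obtain ⟨x, y⟩ := p
  by_cases hxy : 0 ≤ x ∧ 0 ≤ y
  · lift x to ℕ using hxy.1
    lift y to ℕ using hxy.2
    rw [fill_natCast, S.seed_eq_none (by simp) (by simp)]
    split_ifs <;> simp_all
  · rw [fill, S.fillUpTo_of_neg f (by omega)]
    exact iff_or_self.2 fun h => absurd ⟨h.1, h.2.2.1⟩ hxy

variable {S f}

theorem IsCompatibleFilling.terminal_fill (hf : S.IsCompatibleFilling f) :
    Terminal S (S.fill f) := by
  refine ⟨hf.producible_fillUpTo le_rfl, ?_⟩
  rintro β ⟨t, x, y, ⟨-, hnone, ⟨tw, hwest, -⟩, ⟨ts, hsouth, -⟩⟩, -⟩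
  have hcell := S.isSome_fill_iff f (x, y)
  have hleft := S.isSome_fill_iff f (x - 1, y)
  have hbelow := S.isSome_fill_iff f (x, y - 1)
  simp only [hnone, hwest, hsouth, S.seed_dom, Option.isSome_some, Option.isSome_none,
    Prod.mk.injEq, Bool.false_eq_true, true_iff, false_iff] at hcell hleft hbelow
  omega

theorem IsCompatibleFilling.uniquelySelfAssembles (hf : S.IsCompatibleFilling f)
    {pat : ℕ → ℕ → ℕ} (hpat : ∀ x y, x < S.w → y < S.h → (f x y).color = pat x y) :
    UniquelySelfAssembles S S.w S.h pat := by
  refine ⟨S.fill f, hf.terminal_fill, fun x y => ?_, fun x y t ht => ?_⟩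
  · rw [fill_natCast]
    split_ifs <;> simp_all
  · rw [fill_natCast] at ht
    split_ifs at ht with h
    cases ht
    exact hpat x y h.1 h.2

end RTAS

theorem halfAdderTile_mem (A B : Bool) : halfAdderTile A B ∈ halfAdderSet := by
  cases A <;> cases B <;> decide

def counterTile (x y : ℕ) : Tile := halfAdderTile (decide (2 ^ x ∣ y + 1)) (y.testBit x)

theorem counterTile_north (x y : ℕ) :
    (counterTile x y).north = boolGlue ((y + 1).testBit x) := by
  rw [Nat.testBit_add_one_eq_carry_xor]
  rfl

theorem counterTile_west_succ (x y : ℕ) :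
    (counterTile (x + 1) y).west = (counterTile x y).east := by
  simp only [counterTile, halfAdderTile, Nat.two_pow_succ_dvd_add_one_iff, Bool.decide_and,
    Bool.decide_eq_true]

theorem counterTile_color {w x : ℕ} (y : ℕ) (hx : x < w) :
    (counterTile x y).color = (y + 1) % 2 ^ w / 2 ^ x % 2 := by
  rw [← boolGlue_testBit, Nat.testBit_mod_two_pow, decide_eq_true hx, Bool.true_and,
    ← counterTile_north]
  rfl

def counterSeedTile : Tile := ⟨0, 0, 0, 1, 0⟩

def counterSeed (w h : ℕ) : Assembly := fun p =>
  if p = (-1, -1) ∨ (0 ≤ p.1 ∧ p.1 < (w : ℤ) ∧ p.2 = -1) ∨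
      (p.1 = -1 ∧ 0 ≤ p.2 ∧ p.2 < (h : ℤ)) then some counterSeedTile else none

theorem eq_counterSeedTile_of_counterSeed_eq_some {w h : ℕ} {p : ℤ × ℤ} {t : Tile}
    (hp : counterSeed w h p = some t) : t = counterSeedTile := by
  unfold counterSeed at hp
  split_ifs at hp
  exact (Option.some.inj hp).symm

def binaryCounter (w h : ℕ) : RTAS where
  T := halfAdderSet
  w := w
  h := h
  seed := counterSeed w h
  seed_dom p := by
    unfold counterSeed
    split_ifs <;> simp_all
  seed_disjoint _ _ hp := by
    rw [eq_counterSeedTile_of_counterSeed_eq_some hp]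
    decide

theorem isCompatibleFilling_counterTile (w h : ℕ) :
    (binaryCounter w h).IsCompatibleFilling counterTile where
  mem x y _ _ := halfAdderTile_mem _ _
  west_seed y t _ ht := by
    rw [eq_counterSeedTile_of_counterSeed_eq_some ht]
    simp [counterTile, halfAdderTile, boolGlue, counterSeedTile]
  west x y _ _ := counterTile_west_succ x y
  south_seed x t _ ht := by
    rw [eq_counterSeedTile_of_counterSeed_eq_some ht]
    simp [counterTile, halfAdderTile, boolGlue, counterSeedTile]
  south x y _ _ := by
    rw [counterTile_north]
    rfl

/-- The four half-adder tile types form a directed tile set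
of exactly 4 tile types using only 2 colours, and for all `w, h ≥ 1` there is
an L-shaped seed — with all south seed glues `0` and all west seed glues `1` —
for which the resulting directed RTAS uniquely self-assembles the `w × h`
binary counter pattern `P x y = ((y + 1) % 2 ^ w) / 2 ^ x % 2` (the `x`-th
least-significant binary digit of `(y + 1) mod 2 ^ w`). -/
theorem binary_counter_selfassembly :
    halfAdderSet.card = 4 ∧ DirectedTS halfAdderSet ∧
    (halfAdderSet.image Tile.color).card = 2 ∧
    ∀ w h : ℕ, 1 ≤ w → 1 ≤ h →
      ∃ S : RTAS, S.T = halfAdderSet ∧ S.w = w ∧ S.h = h ∧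
        (∀ (x : ℤ) (t : Tile), S.seed (x, -1) = some t → t.north = 0) ∧
        (∀ (y : ℤ) (t : Tile), S.seed (-1, y) = some t → t.east = 1) ∧
        UniquelySelfAssembles S w h (fun x y => ((y + 1) % 2 ^ w) / 2 ^ x % 2) := by
  refine ⟨by decide, by unfold DirectedTS; decide, by decide, fun w h _ _ => ?_⟩
  refine ⟨binaryCounter w h, rfl, rfl, rfl, fun _ t ht => ?_, fun _ t ht => ?_, ?_⟩
  · rw [eq_counterSeedTile_of_counterSeed_eq_some ht]
    rfl
  · rw [eq_counterSeedTile_of_counterSeed_eq_some ht]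
    rfl
  · exact (isCompatibleFilling_counterTile w h).uniquelySelfAssembles
      fun x y hx _ => counterTile_color y hx
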